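/- arXiv:1212.1596 — 2 statements merged into one kernel-verified Lean document; each statement's English description precedes it below -/
import Mathlib

section
/- In a free product Γ = Γ_1 * Γ_2, every unbalanced element of asymmetric type with word length at least 6 does not belong to S_Γ^c · S_Γ^c. -/
open Monoid

open scoped Classical in
/-- The list of letters of the unique reduced form of an element of a free product. -/
noncomputable def FP.letters {ι : Type*} {G : ι → Type*} [∀ i, Group (G i)]
    (γ : CoprodI G) : List (Σ i, G i) :=
  (CoprodI.Word.equiv (M := G) γ).toList

/-- The word length of an element of a free product. -/
noncomputable def FP.wlen {ι : Type*} {G : ι → Type*} [∀ i, Group (G i)]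
    (γ : CoprodI G) : ℕ :=
  (FP.letters γ).length

/-- An element is cyclically reduced if its reduced form `x₁ ⋯ xₙ` has `n ≤ 1` or
`x₁ ≠ xₙ⁻¹`. -/
noncomputable def FP.CyclicallyReduced {ι : Type*} {G : ι → Type*} [∀ i, Group (G i)]
    (γ : CoprodI G) : Prop :=
  FP.wlen γ ≤ 1 ∨ ∀ h : FP.letters γ ≠ [],
    CoprodI.of ((FP.letters γ).head h).2 ≠ (CoprodI.of (((FP.letters γ).getLast h)).2)⁻¹

/-- An element of `Γ₁ * Γ₂` (factor `Γ₁` is indexed by `0 : Fin 2`) is unbalanced if its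
reduced form has length at least 2 and, among its letters lying in `Γ₁`, all have order
greater than two and no letter occurs twice nor together with its inverse. -/
noncomputable def FP.Unbalanced {G : Fin 2 → Type*} [∀ i, Group (G i)]
    (γ : CoprodI G) : Prop :=
  2 ≤ FP.wlen γ ∧
  ∀ k l : Fin (FP.letters γ).length,
    ((FP.letters γ).get k).1 = 0 → ((FP.letters γ).get l).1 = 0 →
      CoprodI.of ((FP.letters γ).get k).2 ≠ (CoprodI.of ((FP.letters γ).get l).2)⁻¹ ∧
      (k ≠ l → CoprodI.of ((FP.letters γ).get k).2 ≠ CoprodI.of ((FP.letters γ).get l).2)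

/-- An element has asymmetric type if the first and last letters of its reduced form lie
in different factors. -/
noncomputable def FP.Asymmetric {ι : Type*} {G : ι → Type*} [∀ i, Group (G i)]
    (γ : CoprodI G) : Prop :=
  ∃ h : FP.letters γ ≠ [],
    ((FP.letters γ).head h).1 ≠ ((FP.letters γ).getLast h).1

namespace FPAux


open CoprodI List

variable {G : Fin 2 → Type*} [∀ i, Group (G i)]

/-- product of a list of letters -/
def π (l : List (Σ i, G i)) : CoprodI G := (l.map fun x => CoprodI.of x.2).prod

/-- formal inverse of a list of letters -/
def invL (l : List (Σ i, G i)) : List (Σ i, G i) :=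
  (l.map fun x => ⟨x.1, x.2⁻¹⟩).reverse

/-- reduced list -/
def Red (l : List (Σ i, G i)) : Prop :=
  (∀ x ∈ l, x.2 ≠ 1) ∧ l.IsChain (fun a b => a.1 ≠ b.1)

@[simp] lemma π_nil : π ([] : List (Σ i, G i)) = 1 := rfl

@[simp] lemma π_cons (x : (Σ i, G i)) (l : List (Σ i, G i)) :
    π (x :: l) = CoprodI.of x.2 * π l := by simp [π]

@[simp] lemma π_append (u v : List (Σ i, G i)) : π (u ++ v) = π u * π v := by
  simp [π]

@[simp] lemma π_single (x : (Σ i, G i)) : π [x] = CoprodI.of x.2 := by simp [π]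

@[simp] lemma invL_nil : invL ([] : List (Σ i, G i)) = [] := rfl

lemma invL_cons (x : (Σ i, G i)) (l : List (Σ i, G i)) :
    invL (x :: l) = invL l ++ [⟨x.1, x.2⁻¹⟩] := by simp [invL]

lemma invL_append (u v : List (Σ i, G i)) : invL (u ++ v) = invL v ++ invL u := by
  simp [invL]

@[simp] lemma invL_single (x : (Σ i, G i)) : invL [x] = [⟨x.1, x.2⁻¹⟩] := by simp [invL]

@[simp] lemma invL_length (l : List (Σ i, G i)) : (invL l).length = l.length := by
  simp [invL]

@[simp] lemma π_invL (l : List (Σ i, G i)) : π (invL l) = (π l)⁻¹ := by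
  induction l with
  | nil => simp
  | cons x l ih => rw [invL_cons]; simp [ih, mul_assoc]

lemma red_nil : Red ([] : List (Σ i, G i)) := ⟨by simp, by simp⟩

lemma red_invL {l : List (Σ i, G i)} (h : Red l) : Red (invL l) := by
  refine ⟨?_, ?_⟩
  · intro x hx
    simp only [invL, List.mem_reverse, List.mem_map] at hx
    obtain ⟨y, hy, rfl⟩ := hx
    simpa using h.1 y hy
  · rw [invL, List.isChain_reverse, List.isChain_map]
    exact h.2.imp (fun a b hab => fun hc => hab hc.symm)

lemma red_append {u v : List (Σ i, G i)} (hu : Red u) (hv : Red v)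
    (hj : ∀ a ∈ u.getLast?, ∀ b ∈ v.head?, a.1 ≠ b.1) : Red (u ++ v) := by
  refine ⟨?_, List.isChain_append.2 ⟨hu.2, hv.2, hj⟩⟩
  intro x hx
  rcases List.mem_append.1 hx with h | h
  · exact hu.1 x h
  · exact hv.1 x h

lemma red_of_append_left {u v : List (Σ i, G i)} (h : Red (u ++ v)) : Red u :=
  ⟨fun x hx => h.1 x (List.mem_append.2 (Or.inl hx)), (List.isChain_append.1 h.2).1⟩

lemma red_of_append_right {u v : List (Σ i, G i)} (h : Red (u ++ v)) : Red v :=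
  ⟨fun x hx => h.1 x (List.mem_append.2 (Or.inr hx)), (List.isChain_append.1 h.2).2.1⟩

lemma red_junction {u v : List (Σ i, G i)} (h : Red (u ++ v)) :
    ∀ a ∈ u.getLast?, ∀ b ∈ v.head?, a.1 ≠ b.1 :=
  (List.isChain_append.1 h.2).2.2

/-- injectivity of Word.prod, any instances -/
lemma prod_inj (d1 : DecidableEq (Fin 2)) (d2 : ∀ i, DecidableEq (G i)) :
    Function.Injective (CoprodI.Word.prod : CoprodI.Word G → CoprodI G) := by
  intro w w' h
  have key : ∀ w : CoprodI.Word G, @CoprodI.Word.equiv _ G _ d1 d2 (CoprodI.Word.prod w) = w :=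
    fun w => @Equiv.apply_symm_apply _ _ (@CoprodI.Word.equiv _ G _ d1 d2) w
  rw [← key w, ← key w', h]

lemma equiv_toList_π (d1 : DecidableEq (Fin 2)) (d2 : ∀ i, DecidableEq (G i))
    {l : List (Σ i, G i)} (h : Red l) :
    (@CoprodI.Word.equiv _ G _ d1 d2 (π l)).toList = l := by
  have h2 : @CoprodI.Word.equiv _ G _ d1 d2 (π l) = ⟨l, h.1, h.2⟩ := by
    apply prod_inj d1 d2
    exact @Equiv.symm_apply_apply _ _ (@CoprodI.Word.equiv _ G _ d1 d2) (π l)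
  rw [h2]

/-- the key bridging lemma -/
lemma letters_π {l : List (Σ i, G i)} (h : Red l) : FP.letters (π l) = l := by
  unfold FP.letters
  exact equiv_toList_π _ _ h

lemma π_toList (d1 : DecidableEq (Fin 2)) (d2 : ∀ i, DecidableEq (G i)) (γ : CoprodI G) :
    π ((@CoprodI.Word.equiv _ G _ d1 d2 γ).toList) = γ :=
  @Equiv.symm_apply_apply _ _ (@CoprodI.Word.equiv _ G _ d1 d2) γ

lemma π_letters (γ : CoprodI G) : π (FP.letters γ) = γ := by
  unfold FP.letters
  exact π_toList _ _ γ

lemma red_toList (d1 : DecidableEq (Fin 2)) (d2 : ∀ i, DecidableEq (G i)) (γ : CoprodI G) :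
    Red ((@CoprodI.Word.equiv _ G _ d1 d2 γ).toList) :=
  ⟨(@CoprodI.Word.equiv _ G _ d1 d2 γ).ne_one, (@CoprodI.Word.equiv _ G _ d1 d2 γ).chain_ne⟩

lemma red_letters (γ : CoprodI G) : Red (FP.letters γ) := by
  unfold FP.letters
  exact red_toList _ _ γ

lemma wlen_eq (γ : CoprodI G) : FP.wlen γ = (FP.letters γ).length := rfl

lemma letters_of {i : Fin 2} {c : G i} (hc : c ≠ 1) :
    FP.letters (CoprodI.of c : CoprodI G) = [⟨i, c⟩] := by
  have h : (CoprodI.of c : CoprodI G) = π [⟨i, c⟩] := by simp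
  rw [h, letters_π]
  exact ⟨by simpa using hc, by simp⟩

lemma of_ne_cross {i j : Fin 2} {a : G i} {b : G j} (hij : i ≠ j) (ha : a ≠ 1) (hb : b ≠ 1) :
    (CoprodI.of a : CoprodI G) ≠ CoprodI.of b := by
  intro h
  have h3 : FP.letters (CoprodI.of a : CoprodI G) = FP.letters (CoprodI.of b : CoprodI G) := by
    rw [h]
  rw [letters_of ha, letters_of hb] at h3
  have h4 : (⟨i, a⟩ : Σ i, G i) = ⟨j, b⟩ := by simpa using h3
  exact hij (congrArg Sigma.fst h4)

/-- Multiplying two reduced words: either clean cancellation of a common part `r`,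
or a merge happened (we only record the length parity). -/
lemma mul_letters_aux (N : ℕ) : ∀ (u v : List (Σ i, G i)), u.length ≤ N → Red u → Red v →
    (∃ u₁ r v₂, u = u₁ ++ r ∧ v = invL r ++ v₂ ∧ FP.letters (π u * π v) = u₁ ++ v₂) ∨
    (∃ k, FP.wlen (π u * π v) + 2 * k + 1 = u.length + v.length) := by
  induction N with
  | zero =>
    intro u v hlen hu hv
    have hun : u = [] := List.eq_nil_of_length_eq_zero (Nat.le_zero.1 hlen)
    subst hun
    exact Or.inl ⟨[], [], v, by simp, by simp, by simpa using letters_π hv⟩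
  | succ N ih =>
    intro u v hlen hu hv
    rcases u.eq_nil_or_concat with rfl | ⟨u', x, hux⟩
    · exact Or.inl ⟨[], [], v, by simp, by simp, by simpa using letters_π hv⟩
    rw [List.concat_eq_append] at hux
    subst hux
    cases v with
    | nil =>
      refine Or.inl ⟨u' ++ [x], [], [], by simp, by simp, ?_⟩
      simpa using letters_π hu
    | cons y v' =>
      have hv' : Red v' := red_of_append_right (u := [y]) (by simpa using hv)
      have hu' : Red u' := red_of_append_left hu
      have hlen' : u'.length ≤ N := by
        have := hlen; simp only [List.length_append, List.length_cons] at this ⊢; omega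
      by_cases hxy : x.1 = y.1
      · obtain ⟨jy, b⟩ := y
        dsimp only at hxy
        subst hxy
        by_cases hm : x.2 * b = 1
        · -- cancellation
          have hπ : π (u' ++ [x]) * π (⟨x.1, b⟩ :: v') = π u' * π v' := by
            have e1 : π (u' ++ [x]) = π u' * CoprodI.of x.2 := by rw [π_append, π_single]
            rw [e1, π_cons, mul_assoc, ← mul_assoc (CoprodI.of x.2), ← MonoidHom.map_mul, hm,
              MonoidHom.map_one, one_mul]
          have hb : b = x.2⁻¹ := (inv_eq_of_mul_eq_one_right hm).symm
          rcases ih u' v' hlen' hu' hv' with ⟨u₁, r, v₂, h1, h2, h3⟩ | ⟨k, hk⟩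
          · refine Or.inl ⟨u₁, r ++ [x], v₂, by rw [h1, List.append_assoc], ?_, by rwa [hπ]⟩
            rw [invL_append, invL_single, hb, h2]
            simp
          · refine Or.inr ⟨k + 1, ?_⟩
            have : FP.wlen (π (u' ++ [x]) * π (⟨x.1, b⟩ :: v')) = FP.wlen (π u' * π v') := by
              rw [hπ]
            rw [this]
            simp at hk ⊢
            omega
        · -- merge
          have hz : (⟨x.1, x.2 * b⟩ : Σ i, G i).2 ≠ 1 := hm
          have hred : Red (u' ++ ⟨x.1, x.2 * b⟩ :: v') := by
            constructor
            · intro w hw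
              rcases List.mem_append.1 hw with h | h
              · exact hu.1 w (List.mem_append.2 (Or.inl h))
              · rcases List.mem_cons.1 h with rfl | h
                · exact hz
                · exact hv.1 w (List.mem_cons.2 (Or.inr h))
            · rw [List.isChain_append]
              refine ⟨(List.isChain_append.1 hu.2).1, ?_, ?_⟩
              · rw [List.isChain_cons]
                exact ⟨fun b' hb' => (List.isChain_cons.1 hv.2).1 b' hb',
                  (List.isChain_cons.1 hv.2).2⟩
              · intro a ha b' hb'
                simp only [List.head?_cons, Option.mem_def, Option.some.injEq] at hb'
                subst hb'
                exact (List.isChain_append.1 hu.2).2.2 a ha x (by simp)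
          have hπ : π (u' ++ [x]) * π (⟨x.1, b⟩ :: v') = π (u' ++ ⟨x.1, x.2 * b⟩ :: v') := by
            have e1 : π (u' ++ [x]) = π u' * CoprodI.of x.2 := by rw [π_append, π_single]
            rw [e1, π_cons, π_append, π_cons, mul_assoc, ← mul_assoc (CoprodI.of x.2),
              ← MonoidHom.map_mul]
          refine Or.inr ⟨0, ?_⟩
          rw [FP.wlen, hπ, letters_π hred]
          simp
          omega
      · -- different factors, no cancellation
        refine Or.inl ⟨u' ++ [x], [], y :: v', by simp, by simp, ?_⟩
        have hred : Red ((u' ++ [x]) ++ y :: v') := by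
          refine red_append hu hv ?_
          intro a ha b' hb'
          simp only [List.getLast?_concat, Option.mem_def, Option.some.injEq] at ha
          simp only [List.head?_cons, Option.mem_def, Option.some.injEq] at hb'
          subst ha; subst hb'
          exact hxy
        have : π (u' ++ [x]) * π (y :: v') = π ((u' ++ [x]) ++ y :: v') := by
          simp [mul_assoc]
        rw [this, letters_π hred]

lemma mul_letters (u v : List (Σ i, G i)) (hu : Red u) (hv : Red v) :
    (∃ u₁ r v₂, u = u₁ ++ r ∧ v = invL r ++ v₂ ∧ FP.letters (π u * π v) = u₁ ++ v₂) ∨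
    (∃ k, FP.wlen (π u * π v) + 2 * k + 1 = u.length + v.length) :=
  mul_letters_aux u.length u v le_rfl hu hv

/-- reduced form of a conjugate of a single letter -/
lemma shortconj_aux (N : ℕ) : ∀ (lg : List (Σ i, G i)), lg.length ≤ N → Red lg →
    ∀ (i : Fin 2) (c : G i), c ≠ 1 →
    ∃ (p : List (Σ i, G i)) (d : Σ i, G i), d.2 ≠ 1 ∧ Red (p ++ [d] ++ invL p) ∧
      FP.letters (π lg * CoprodI.of c * (π lg)⁻¹) = p ++ [d] ++ invL p := by
  induction N with
  | zero =>
    intro lg hlen hred i c hc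
    have : lg = [] := List.eq_nil_of_length_eq_zero (Nat.le_zero.1 hlen)
    subst this
    refine ⟨[], ⟨i, c⟩, hc, ?_, ?_⟩
    · exact ⟨by simpa using hc, by simp⟩
    · simpa using letters_of hc
  | succ N ih =>
    intro lg hlen hred i c hc
    rcases lg.eq_nil_or_concat with rfl | ⟨lg', b, hux⟩
    · refine ⟨[], ⟨i, c⟩, hc, ?_, ?_⟩
      · exact ⟨by simpa using hc, by simp⟩
      · simpa using letters_of hc
    rw [List.concat_eq_append] at hux
    subst hux
    have hred' : Red lg' := red_of_append_left hred
    have hlen' : lg'.length ≤ N := by simp at hlen; omega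
    have hπb : π (lg' ++ [b]) = π lg' * CoprodI.of b.2 := by rw [π_append, π_single]
    by_cases hbi : b.1 = i
    · obtain ⟨jb, bb⟩ := b
      dsimp only at hbi
      subst hbi
      have hc' : bb * c * bb⁻¹ ≠ 1 := by
        intro h
        exact hc (by
          have := congrArg (fun z => bb⁻¹ * z * bb) h
          simpa [mul_assoc] using this)
      have heq : π (lg' ++ [⟨jb, bb⟩]) * CoprodI.of c * (π (lg' ++ [⟨jb, bb⟩]))⁻¹ =
          π lg' * CoprodI.of (bb * c * bb⁻¹) * (π lg')⁻¹ := by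
        rw [hπb]
        simp [mul_inv_rev, mul_assoc]
      rw [heq]
      exact ih lg' hlen' hred' jb (bb * c * bb⁻¹) hc'
    · -- no further cancellation
      have hinvform : invL (lg' ++ [b]) = ⟨b.1, b.2⁻¹⟩ :: invL lg' := by
        rw [invL_append, invL_single]; simp
      have hRED : Red (((lg' ++ [b]) ++ [⟨i, c⟩]) ++ invL (lg' ++ [b])) := by
        have h1 : Red [(⟨i, c⟩ : Σ i, G i)] := ⟨by simpa using hc, by simp⟩
        have hinv : Red (invL (lg' ++ [b])) := red_invL hred
        refine red_append (red_append hred h1 ?_) hinv ?_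
        · intro a ha b' hb'
          simp only [List.getLast?_concat, Option.mem_def, Option.some.injEq] at ha
          simp only [List.head?_cons, Option.mem_def, Option.some.injEq] at hb'
          subst ha; subst hb'
          exact hbi
        · intro a ha b' hb'
          have h5 : ((lg' ++ [b]) ++ [(⟨i, c⟩ : Σ i, G i)]).getLast? = some ⟨i, c⟩ :=
            List.getLast?_concat
          rw [Option.mem_def, h5] at ha
          have ha' : a = (⟨i, c⟩ : Σ i, G i) := (Option.some.inj ha).symm
          subst ha'
          rw [hinvform] at hb'
          simp only [List.head?_cons, Option.mem_def, Option.some.injEq] at hb'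
          subst hb'
          exact fun hh => hbi (by simpa using hh.symm)
      refine ⟨lg' ++ [b], ⟨i, c⟩, hc, hRED, ?_⟩
      have hform : π (lg' ++ [b]) * CoprodI.of c * (π (lg' ++ [b]))⁻¹ =
          π (((lg' ++ [b]) ++ [⟨i, c⟩]) ++ invL (lg' ++ [b])) := by
        simp [mul_assoc]
      rw [hform, letters_π hRED]

lemma shortconj {σ : CoprodI G} (g : CoprodI G) {i : Fin 2} {c : G i} (hc : c ≠ 1)
    (hσ : σ = g * CoprodI.of c * g⁻¹) :
    ∃ (p : List (Σ i, G i)) (d : Σ i, G i), d.2 ≠ 1 ∧ Red (p ++ [d] ++ invL p) ∧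
      FP.letters σ = p ++ [d] ++ invL p := by
  have hg : g = π (FP.letters g) := (π_letters g).symm
  rw [hσ, hg]
  exact shortconj_aux (FP.letters g).length (FP.letters g) le_rfl (red_letters g) i c hc

/-- powers of a cyclically reduced word grow -/
lemma pow_red (x y : Σ i, G i) (mid : List (Σ i, G i))
    (hred : Red (x :: (mid ++ [y])))
    (hcyc : x.1 ≠ y.1 ∨ CoprodI.of y.2 * CoprodI.of x.2 ≠ (1 : CoprodI G)) :
    ∀ n, 1 ≤ n → ∃ L : List (Σ i, G i), Red L ∧ π L = (π (x :: (mid ++ [y]))) ^ n ∧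
      n + 1 ≤ L.length ∧ L.head? = some x ∧ L.getLast? = some y := by
  have hlm_last : (x :: (mid ++ [y])).getLast? = some y := by
    rw [show x :: (mid ++ [y]) = (x :: mid) ++ [y] by simp]
    exact List.getLast?_concat
  by_cases hij : x.1 = y.1
  · -- same factor at the two ends
    have hne : CoprodI.of y.2 * CoprodI.of x.2 ≠ (1 : CoprodI G) := by
      rcases hcyc with h | h
      · exact absurd hij h
      · exact h
    obtain ⟨jy, cy⟩ := y
    dsimp only at hij
    subst hij
    have hm : cy * x.2 ≠ 1 := by
      intro h
      apply hne
      dsimp only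
      rw [← MonoidHom.map_mul, h, MonoidHom.map_one]
    have hπlm : π (x :: (mid ++ [⟨x.1, cy⟩])) =
        CoprodI.of x.2 * π mid * CoprodI.of cy := by
      rw [π_cons, π_append, π_single, mul_assoc]
    have hmidne : mid ≠ [] := by
      intro h
      subst h
      have := hred.2
      simp only [List.nil_append, List.isChain_cons] at this
      exact this.1 ⟨x.1, cy⟩ (by simp) rfl
    have hchain := hred.2
    rw [List.isChain_cons] at hchain
    have hxmid : ∀ b ∈ mid.head?, x.1 ≠ b.1 := by
      intro b hb
      exact hchain.1 b (by
        rw [List.head?_append_of_ne_nil _ hmidne]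
        exact hb)
    have hmidy := List.isChain_append.1 hchain.2
    have hchain_mid : mid.IsChain (fun a b => a.1 ≠ b.1) := hmidy.1
    have hmidlast : ∀ a ∈ mid.getLast?, a.1 ≠ x.1 := by
      intro a ha
      exact hmidy.2.2 a ha ⟨x.1, cy⟩ (by simp)
    intro n hn
    induction n, hn using Nat.le_induction with
    | base =>
      refine ⟨x :: (mid ++ [⟨x.1, cy⟩]), hred, by rw [pow_one], ?_, rfl, hlm_last⟩
      simp
    | succ n hn ihn =>
      obtain ⟨L, hLred, hLπ, hLlen, hLhead, hLlast⟩ := ihn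
      cases L with
      | nil => simp at hLhead
      | cons a Ltail =>
        have hax : a = x := by simpa using hLhead
        rw [hax] at hLred hLπ hLlen hLlast
        have htne : Ltail ≠ [] := by
          intro h
          subst h
          simp at hLlen
          omega
        have hjt : ∀ b ∈ Ltail.head?, x.1 ≠ b.1 := (List.isChain_cons.1 hLred.2).1
        have hchain_t : Ltail.IsChain (fun a b => a.1 ≠ b.1) := (List.isChain_cons.1 hLred.2).2
        have h1 : Ltail.getLast? = some ⟨x.1, cy⟩ := by
          rw [← List.getLast?_append_of_ne_nil [x] htne]
          exact hLlast
        refine ⟨x :: (mid ++ (⟨x.1, cy * x.2⟩ :: Ltail)), ?_, ?_, ?_, rfl, ?_⟩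
        · constructor
          · intro w hw
            simp only [List.mem_cons, List.mem_append] at hw
            rcases hw with rfl | (h | (rfl | h))
            · exact hred.1 w (by simp)
            · exact hred.1 w (by simp [h])
            · exact hm
            · exact hLred.1 w (by simp [h])
          · rw [List.isChain_cons]
            constructor
            · intro b hb
              rw [List.head?_append_of_ne_nil _ hmidne] at hb
              exact hxmid b hb
            · rw [List.isChain_append]
              refine ⟨hchain_mid, ?_, ?_⟩
              · rw [List.isChain_cons]
                exact ⟨fun b hb => hjt b hb, hchain_t⟩
              · intro a' ha' b hb
                simp only [List.head?_cons, Option.mem_def, Option.some.injEq] at hb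
                subst hb
                exact hmidlast a' ha'
        · rw [pow_succ', ← hLπ, hπlm]
          simp [π_cons, π_append, MonoidHom.map_mul, mul_assoc]
        · simp only [List.length_cons, List.length_append] at hLlen ⊢
          omega
        · rw [show x :: (mid ++ (⟨x.1, cy * x.2⟩ :: Ltail)) =
            (x :: mid) ++ (⟨x.1, cy * x.2⟩ :: Ltail) by simp,
            List.getLast?_append_cons,
            show (⟨x.1, cy * x.2⟩ : Σ i, G i) :: Ltail = [⟨x.1, cy * x.2⟩] ++ Ltail by simp,
            List.getLast?_append_of_ne_nil _ htne]
          exact h1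
  · -- ends in different factors
    intro n hn
    induction n, hn using Nat.le_induction with
    | base =>
      refine ⟨x :: (mid ++ [y]), hred, by rw [pow_one], ?_, rfl, hlm_last⟩
      simp
    | succ n hn ihn =>
      obtain ⟨L, hLred, hLπ, hLlen, hLhead, hLlast⟩ := ihn
      have hLne : L ≠ [] := by
        intro h; subst h; simp at hLlen
      refine ⟨(x :: (mid ++ [y])) ++ L, ?_, ?_, ?_, ?_, ?_⟩
      · refine red_append hred hLred ?_
        intro a ha b hb
        rw [Option.mem_def, hlm_last] at ha
        rw [Option.mem_def, hLhead] at hb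
        have ha' : a = y := (Option.some.inj ha).symm
        have hb' : b = x := (Option.some.inj hb).symm
        rw [ha', hb']
        exact fun h => hij h.symm
      · rw [pow_succ', ← hLπ, π_append]
      · simp only [List.length_append, List.length_cons, List.length_append] at hLlen ⊢
        omega
      · rw [List.head?_append_of_ne_nil _ (by simp : x :: (mid ++ [y]) ≠ [])]
        rfl
      · rw [List.getLast?_append_of_ne_nil _ hLne]
        exact hLlast

/-- structure theorem: every element is either conjugate to a letter (or 1), or has a
conjugacy-normal form with a cyclically reduced core of length at least 2 -/
lemma structure_thm (N : ℕ) : ∀ σ : CoprodI G, (FP.letters σ).length ≤ N →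
    (∃ (g : CoprodI G) (i : Fin 2) (c : G i), σ = g * CoprodI.of c * g⁻¹) ∨
    (∃ (lg : List (Σ i, G i)) (x y : Σ i, G i) (mid : List (Σ i, G i)),
      FP.letters σ = lg ++ ((x :: (mid ++ [y])) ++ invL lg) ∧
      (x.1 ≠ y.1 ∨ CoprodI.of y.2 * CoprodI.of x.2 ≠ (1 : CoprodI G))) := by
  induction N with
  | zero =>
    intro σ hlen
    left
    have h0 : FP.letters σ = [] := List.eq_nil_of_length_eq_zero (Nat.le_zero.1 hlen)
    have : σ = 1 := by
      have := π_letters σ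
      rw [h0] at this
      simpa using this.symm
    exact ⟨1, 0, 1, by simp [this]⟩
  | succ N ih =>
    intro σ hlen
    match hls : FP.letters σ, hlen with
    | [], _ =>
      left
      have : σ = 1 := by
        have := π_letters σ
        rw [hls] at this
        simpa using this.symm
      exact ⟨1, 0, 1, by simp [this]⟩
    | [z], _ =>
      left
      have : σ = CoprodI.of z.2 := by
        have := π_letters σ
        rw [hls] at this
        simpa using this.symm
      exact ⟨1, z.1, z.2, by simp [this]⟩
    | z :: w :: rest, hlen => ?_
    set tl := w :: rest with htl
    have htlne : tl ≠ [] := by simp [htl]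
    have hdecomp : FP.letters σ = z :: (tl.dropLast ++ [tl.getLast htlne]) := by
      rw [hls, List.dropLast_append_getLast htlne]
    set x := z
    set mid := tl.dropLast
    set y := tl.getLast htlne with hy
    have htl2 : tl = mid ++ [y] := by
      have h7 := hls.symm.trans hdecomp
      injection h7 with _ h8
    have hredσ : Red (x :: (mid ++ [y])) := by
      rw [← hdecomp]; exact red_letters σ
    by_cases hcyc : x.1 ≠ y.1 ∨ CoprodI.of y.2 * CoprodI.of x.2 ≠ (1 : CoprodI G)
    · right
      exact ⟨[], x, y, mid, by simp [hls, htl2], hcyc⟩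
    · push_neg at hcyc
      obtain ⟨hxy, hprod⟩ := hcyc
      -- strip the two end letters
      have hredmid : Red mid :=
        red_of_append_right (u := [x])
          (red_of_append_left (v := [y]) (by simpa using hredσ))
      have hπσ : σ = CoprodI.of x.2 * π mid * CoprodI.of y.2 := by
        have := π_letters σ
        rw [hdecomp] at this
        rw [← this, π_cons, π_append, π_single, mul_assoc]
      have hyinv : CoprodI.of y.2 = (CoprodI.of x.2)⁻¹ := by
        rw [eq_inv_iff_mul_eq_one]
        exact hprod
      have hσconj : σ = CoprodI.of x.2 * π mid * (CoprodI.of x.2)⁻¹ := by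
        rw [hπσ, hyinv]
      have hlettersmid : FP.letters (π mid) = mid := letters_π hredmid
      have hmidlen : (FP.letters (π mid)).length ≤ N := by
        rw [hlettersmid]
        have : (FP.letters σ).length = mid.length + 2 := by
          rw [hdecomp]; simp
        omega
      rcases ih (π mid) hmidlen with ⟨g, i, c, hg⟩ | ⟨lg', x', y', mid', hdec', hcyc'⟩
      · left
        refine ⟨CoprodI.of x.2 * g, i, c, ?_⟩
        rw [hσconj, hg]
        simp [mul_assoc]
      · right
        -- y = ⟨x.1, x.2⁻¹⟩
        obtain ⟨jy, cy⟩ := y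
        have hjy : x.1 = jy := hxy
        subst hjy
        have hcy : cy = x.2⁻¹ := by
          apply CoprodI.of_injective
          rw [MonoidHom.map_inv]
          rw [eq_inv_iff_mul_eq_one]
          exact hprod
        refine ⟨x :: lg', x', y', mid', ?_, hcyc'⟩
        have hmid2 : mid = lg' ++ ((x' :: (mid' ++ [y'])) ++ invL lg') := hlettersmid ▸ hdec'
        rw [htl2, hmid2, hcy, invL_cons]
        simp [List.append_assoc]

lemma growth {σ : CoprodI G}
    (h : ¬ ∃ (g : CoprodI G) (i : Fin 2) (c : G i), σ = g * CoprodI.of c * g⁻¹) :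
    ∀ n, 1 ≤ n → n ≤ FP.wlen (σ ^ n) := by
  rcases structure_thm (FP.letters σ).length σ le_rfl with hl | ⟨lg, x, y, mid, hdec, hcyc⟩
  · exact absurd hl h
  intro n hn
  have hredall : Red (lg ++ ((x :: (mid ++ [y])) ++ invL lg)) := by
    rw [← hdec]; exact red_letters σ
  have hredlm : Red (x :: (mid ++ [y])) := red_of_append_left (red_of_append_right hredall)
  obtain ⟨L, hLred, hLπ, hLlen, hLhead, hLlast⟩ := pow_red x y mid hredlm hcyc n hn
  have hLne : L ≠ [] := by
    intro hh; subst hh; simp at hLlen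
  have hlm_last : (x :: (mid ++ [y])).getLast? = some y := by
    rw [show x :: (mid ++ [y]) = (x :: mid) ++ [y] by simp]
    exact List.getLast?_concat
  have hσ : σ = π lg * π (x :: (mid ++ [y])) * (π lg)⁻¹ := by
    have h2 := π_letters σ
    rw [hdec] at h2
    rw [← h2, π_append, π_append, π_invL, mul_assoc]
  have hjunc1 := red_junction (u := lg) hredall
  have hjunc2 := red_junction (u := x :: (mid ++ [y])) (red_of_append_right hredall)
  have hredNew : Red (lg ++ (L ++ invL lg)) := by
    refine red_append (red_of_append_left hredall)
      (red_append hLred (red_invL (red_of_append_left hredall)) ?_) ?_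
    · intro a ha b hb
      rw [Option.mem_def, hLlast] at ha
      have ha' : a = y := (Option.some.inj ha).symm
      subst ha'
      exact hjunc2 a (by rw [Option.mem_def, hlm_last]) b hb
    · intro a ha b hb
      rw [List.head?_append_of_ne_nil _ hLne, Option.mem_def, hLhead] at hb
      have hb' : b = x := (Option.some.inj hb).symm
      subst hb'
      exact hjunc1 a ha b (by rw [Option.mem_def]; rfl)
  have hσn : σ ^ n = π (lg ++ (L ++ invL lg)) := by
    rw [hσ, conj_pow, π_append, π_append, π_invL, hLπ, mul_assoc]
  rw [FP.wlen, hσn, letters_π hredNew]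
  simp only [List.length_append, invL_length]
  omega

lemma elliptic_of_shrink {σ : CoprodI G} (h : ∃ n, 1 ≤ n ∧ FP.wlen (σ ^ n) < n) :
    ∃ (g : CoprodI G) (i : Fin 2) (c : G i), σ = g * CoprodI.of c * g⁻¹ := by
  by_contra hc
  obtain ⟨n, hn, hlt⟩ := h
  exact absurd (growth hc n hn) (by omega)

section Counting

open scoped Classical

/-- number of letters of `l` whose image under `of` is `a` or `a⁻¹` -/
noncomputable def cnt (a : CoprodI G) : List (Σ i, G i) → ℕ
  | [] => 0
  | z :: l => (if CoprodI.of z.2 = a ∨ CoprodI.of z.2 = a⁻¹ then 1 else 0) + cnt a l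

@[simp] lemma cnt_nil (a : CoprodI G) : cnt a [] = 0 := rfl

lemma cnt_cons (a : CoprodI G) (z : Σ i, G i) (l : List (Σ i, G i)) :
    cnt a (z :: l) = (if CoprodI.of z.2 = a ∨ CoprodI.of z.2 = a⁻¹ then 1 else 0) + cnt a l :=
  rfl

lemma cnt_append (a : CoprodI G) (l l' : List (Σ i, G i)) :
    cnt a (l ++ l') = cnt a l + cnt a l' := by
  induction l with
  | nil => simp
  | cons z l ih => rw [List.cons_append, cnt_cons, cnt_cons, ih]; omega

lemma cnt_single_le (a : CoprodI G) (z : Σ i, G i) : cnt a [z] ≤ 1 := by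
  rw [cnt_cons]
  split <;> simp

lemma cnt_invL (a : CoprodI G) (l : List (Σ i, G i)) : cnt a (invL l) = cnt a l := by
  induction l with
  | nil => simp
  | cons z l ih =>
    rw [invL_cons, cnt_append, ih, cnt_cons, cnt_cons]
    have hiff : ((CoprodI.of (⟨z.1, z.2⁻¹⟩ : Σ i, G i).2 : CoprodI G) = a ∨
        (CoprodI.of (⟨z.1, z.2⁻¹⟩ : Σ i, G i).2 : CoprodI G) = a⁻¹) ↔
        ((CoprodI.of z.2 : CoprodI G) = a ∨ (CoprodI.of z.2 : CoprodI G) = a⁻¹) := by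
      dsimp only
      rw [MonoidHom.map_inv, inv_eq_iff_eq_inv, inv_eq_iff_eq_inv, inv_inv, or_comm]
    rw [if_congr hiff rfl rfl, cnt_nil]
    omega

lemma cnt_eq_zero {a : CoprodI G} {l : List (Σ i, G i)}
    (h : ∀ z ∈ l, ¬((CoprodI.of z.2 : CoprodI G) = a ∨ (CoprodI.of z.2 : CoprodI G) = a⁻¹)) :
    cnt a l = 0 := by
  induction l with
  | nil => simp
  | cons z l ih =>
    rw [cnt_cons, if_neg (h z (by simp)), ih (fun w hw => h w (by simp [hw]))]

lemma cnt_eq_one {a : CoprodI G} : ∀ (l : List (Σ i, G i)) (j : ℕ) (hj : j < l.length),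
    ((CoprodI.of (l.get ⟨j, hj⟩).2 : CoprodI G) = a ∨
      (CoprodI.of (l.get ⟨j, hj⟩).2 : CoprodI G) = a⁻¹) →
    (∀ k (hk : k < l.length), k ≠ j →
      ¬((CoprodI.of (l.get ⟨k, hk⟩).2 : CoprodI G) = a ∨
        (CoprodI.of (l.get ⟨k, hk⟩).2 : CoprodI G) = a⁻¹)) →
    cnt a l = 1 := by
  intro l
  induction l with
  | nil => intro j hj; simp at hj
  | cons z l ih =>
    intro j hj hcond hothers
    cases j with
    | zero =>
      rw [cnt_cons, if_pos (by exact hcond)]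
      have h0 : cnt a l = 0 := by
        apply cnt_eq_zero
        intro w hw
        obtain ⟨⟨k, hk⟩, rfl⟩ := List.mem_iff_get.1 hw
        have := hothers (k + 1) (by simpa using Nat.succ_lt_succ hk) (by simp)
        simpa using this
      omega
    | succ j =>
      rw [cnt_cons, if_neg (by exact hothers 0 (by omega) (by simp))]
      have hj' : j < l.length := by simpa using Nat.lt_of_succ_lt_succ hj
      rw [ih j hj' (by simpa using hcond) ?_]
      intro k hk hkj
      have := hothers (k + 1) (by simpa using Nat.succ_lt_succ hk) (by omega)
      simpa using this

end Counting

/-- letters of a reduced word alternate between the two factors -/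
lemma alt_get {l : List (Σ i, G i)} (hred : Red l) :
    ∀ k (hk : k < l.length),
      ((l.get ⟨k, hk⟩).1 = (l.get ⟨0, by omega⟩).1 ↔ Even k) := by
  intro k
  induction k with
  | zero => intro hk; simp
  | succ k ihk =>
    intro hk
    have hk' : k < l.length := by omega
    have hadj : (l.get ⟨k + 1, hk⟩).1 ≠ (l.get ⟨k, hk'⟩).1 := by
      have := List.isChain_iff_getElem.1 hred.2 k (by omega)
      exact fun hh => this hh.symm
    have h2 : ∀ p q r : Fin 2, p ≠ q → (p = r ↔ ¬(q = r)) := by decide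
    rw [h2 _ _ _ hadj, ihk hk', Nat.even_add_one]

end FPAux

open FPAux in
private 
theorem FPAux.main (G : Fin 2 → Type*)
    [∀ i, Group (G i)] [∀ i, Nontrivial (G i)] (γ : CoprodI G)
    (hunb : FP.Unbalanced γ) (hasym : FP.Asymmetric γ) (hlen : 6 ≤ FP.wlen γ) :
    ¬ ∃ σ τ : CoprodI G,
        (∃ n : ℕ, 1 ≤ n ∧ FP.wlen (σ ^ n) < n) ∧
        (∃ n : ℕ, 1 ≤ n ∧ FP.wlen (τ ^ n) < n) ∧ γ = σ * τ := by
  rintro ⟨σ, τ, hσS, hτS, hγ⟩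
  obtain ⟨g, i, c, hgc⟩ := elliptic_of_shrink hσS
  obtain ⟨h, j, e, hhe⟩ := elliptic_of_shrink hτS
  have hredℓ : Red (FP.letters γ) := red_letters γ
  have hlen' : 6 ≤ (FP.letters γ).length := hlen
  have h0 : 0 < (FP.letters γ).length := by omega
  obtain ⟨hnil, hasym2⟩ := hasym
  have halt := alt_get hredℓ
  -- the length is even
  have hNeven : (FP.letters γ).length % 2 = 0 := by
    have h1 := halt ((FP.letters γ).length - 1) (by omega)
    have hhead : (FP.letters γ).head hnil = (FP.letters γ).get ⟨0, h0⟩ := by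
      rw [List.head_eq_getElem_zero hnil]
      simp [List.get_eq_getElem]
    have hlast : (FP.letters γ).getLast hnil =
        (FP.letters γ).get ⟨(FP.letters γ).length - 1, by omega⟩ :=
      List.getLast_eq_getElem _
    rw [hhead, hlast] at hasym2
    have h2 : ¬ Even ((FP.letters γ).length - 1) := fun he => hasym2 (h1.2 he).symm
    rw [Nat.even_iff] at h2
    omega
  -- a letter of 1 is never its own inverse-image mate across factors
  -- count-equals-one at Γ₁ positions
  have hcnt1 : ∀ (t : ℕ) (ht : t < (FP.letters γ).length),
      ((FP.letters γ).get ⟨t, ht⟩).1 = 0 →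
      cnt (CoprodI.of ((FP.letters γ).get ⟨t, ht⟩).2) (FP.letters γ) = 1 := by
    intro t ht h0t
    apply cnt_eq_one (FP.letters γ) t ht (Or.inl rfl)
    intro k hk hkj hcond
    by_cases hk0 : ((FP.letters γ).get ⟨k, hk⟩).1 = 0
    · have hpair := hunb.2 ⟨k, hk⟩ ⟨t, ht⟩ hk0 h0t
      rcases hcond with hc | hc
      · exact hpair.2 (Fin.ne_of_val_ne hkj) hc
      · exact hpair.1 hc
    · have h1 : ((FP.letters γ).get ⟨k, hk⟩).1 ≠ ((FP.letters γ).get ⟨t, ht⟩).1 := by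
        rw [h0t]; exact hk0
      have hkne1 : ((FP.letters γ).get ⟨k, hk⟩).2 ≠ 1 :=
        hredℓ.1 _ (List.get_mem _ _)
      have htne1 : ((FP.letters γ).get ⟨t, ht⟩).2 ≠ 1 :=
        hredℓ.1 _ (List.get_mem _ _)
      rcases hcond with hc | hc
      · exact of_ne_cross h1 hkne1 htne1 hc
      · rw [← MonoidHom.map_inv] at hc
        exact of_ne_cross h1 hkne1 (inv_ne_one.2 htne1) hc
  -- degenerate cases
  by_cases hc1 : c = 1
  · have hσ1 : σ = 1 := by rw [hgc, hc1]; simp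
    rw [hσ1, one_mul] at hγ
    by_cases he1 : e = 1
    · have hτ1 : τ = 1 := by rw [hhe, he1]; simp
      rw [hτ1] at hγ
      have h1 : FP.letters γ = [] := by
        rw [hγ, ← π_nil, letters_π red_nil]
      rw [h1] at hlen'
      simp at hlen'
    · obtain ⟨q, ee, hee1, hQred, hQl⟩ := shortconj h he1 (hγ.trans hhe)
      have := congrArg List.length hQl
      simp only [List.length_append, invL_length, List.length_cons, List.length_nil] at this
      omega
  by_cases he1 : e = 1
  · have hτ1 : τ = 1 := by rw [hhe, he1]; simp
    rw [hτ1, mul_one] at hγ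
    obtain ⟨p, d, hd1, hPred, hPl⟩ := shortconj g hc1 (hγ.trans hgc)
    have := congrArg List.length hPl
    simp only [List.length_append, invL_length, List.length_cons, List.length_nil] at this
    omega
  -- main case
  obtain ⟨p, d, hd1, hPred, hPl⟩ := shortconj g hc1 hgc
  obtain ⟨q, ee, hee1, hQred, hQl⟩ := shortconj h he1 hhe
  have hσπ : σ = π (p ++ [d] ++ invL p) := by rw [← hPl, π_letters]
  have hτπ : τ = π (q ++ [ee] ++ invL q) := by rw [← hQl, π_letters]
  have hγπ : γ = π (p ++ [d] ++ invL p) * π (q ++ [ee] ++ invL q) := by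
    rw [hγ, hσπ, hτπ]
  rcases mul_letters _ _ hPred hQred with ⟨P₁, r, Q₂, hP, hQ, hsplit⟩ | ⟨k, hk⟩
  · -- clean cancellation : counting argument
    have hγsplit : FP.letters γ = P₁ ++ Q₂ := by rw [hγπ]; exact hsplit
    have hparity : ∀ a : CoprodI G, cnt a (FP.letters γ) + 2 * cnt a r =
        2 * cnt a p + 2 * cnt a q + cnt a [d] + cnt a [ee] := by
      intro a
      have e1 : cnt a (FP.letters γ) = cnt a P₁ + cnt a Q₂ := by
        rw [hγsplit, cnt_append]
      have e2 : cnt a p + cnt a [d] + cnt a p = cnt a P₁ + cnt a r := by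
        have := congrArg (cnt a) hP
        rw [cnt_append, cnt_append, cnt_append, cnt_invL] at this
        omega
      have e3 : cnt a r + cnt a Q₂ = cnt a q + cnt a [ee] + cnt a q := by
        have := congrArg (cnt a) hQ
        rw [cnt_append, cnt_append, cnt_append, cnt_invL, cnt_invL] at this
        omega
      omega
    have hde : ∀ (t : ℕ) (ht : t < (FP.letters γ).length),
        ((FP.letters γ).get ⟨t, ht⟩).1 = 0 →
        (CoprodI.of d.2 = CoprodI.of ((FP.letters γ).get ⟨t, ht⟩).2 ∨
          CoprodI.of d.2 = (CoprodI.of ((FP.letters γ).get ⟨t, ht⟩).2)⁻¹) ∨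
        (CoprodI.of ee.2 = CoprodI.of ((FP.letters γ).get ⟨t, ht⟩).2 ∨
          CoprodI.of ee.2 = (CoprodI.of ((FP.letters γ).get ⟨t, ht⟩).2)⁻¹) := by
      intro t ht h0t
      have h1 := hcnt1 t ht h0t
      have h2 := hparity (CoprodI.of ((FP.letters γ).get ⟨t, ht⟩).2)
      have h3 := cnt_single_le (CoprodI.of ((FP.letters γ).get ⟨t, ht⟩).2) d
      have h4 := cnt_single_le (CoprodI.of ((FP.letters γ).get ⟨t, ht⟩).2) ee
      have h5 : cnt (CoprodI.of ((FP.letters γ).get ⟨t, ht⟩).2) [d] = 1 ∨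
          cnt (CoprodI.of ((FP.letters γ).get ⟨t, ht⟩).2) [ee] = 1 := by omega
      rcases h5 with h5 | h5
      · left
        by_contra hcc
        rw [cnt_cons, if_neg hcc, cnt_nil] at h5
        simp at h5
      · right
        by_contra hcc
        rw [cnt_cons, if_neg hcc, cnt_nil] at h5
        simp at h5
    -- two Γ₁ positions cannot share the same mate
    have hpair : ∀ (t t' : ℕ) (ht : t < (FP.letters γ).length)
        (ht' : t' < (FP.letters γ).length), t ≠ t' →
        ((FP.letters γ).get ⟨t, ht⟩).1 = 0 → ((FP.letters γ).get ⟨t', ht'⟩).1 = 0 →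
        ∀ z : Σ i, G i,
        (CoprodI.of z.2 = CoprodI.of ((FP.letters γ).get ⟨t, ht⟩).2 ∨
          CoprodI.of z.2 = (CoprodI.of ((FP.letters γ).get ⟨t, ht⟩).2)⁻¹) →
        (CoprodI.of z.2 = CoprodI.of ((FP.letters γ).get ⟨t', ht'⟩).2 ∨
          CoprodI.of z.2 = (CoprodI.of ((FP.letters γ).get ⟨t', ht'⟩).2)⁻¹) → False := by
      intro t t' ht ht' htt' h0t h0t' z hz hz'
      have hp1 := hunb.2 ⟨t, ht⟩ ⟨t', ht'⟩ h0t h0t'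
      have hp2 := hunb.2 ⟨t', ht'⟩ ⟨t, ht⟩ h0t' h0t
      rcases hz with hz | hz <;> rcases hz' with hz' | hz'
      · exact hp1.2 (Fin.ne_of_val_ne htt') (hz.symm.trans hz')
      · exact hp1.1 (hz.symm.trans hz')
      · exact hp2.1 (hz'.symm.trans hz)
      · exact hp1.2 (Fin.ne_of_val_ne htt') (by
          have := hz.symm.trans hz'
          exact inv_injective this)
    -- three Γ₁ positions among the first six letters
    have hfin1 : ∀ pq : Fin 2, pq ≠ 0 → pq = 1 := by decide
    have hfin2 : ∀ pq q' : Fin 2, ¬(pq = q') → q' = 1 → pq = 0 := by decide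
    obtain ⟨t1, t2, t3, ht1, ht2, ht3, h12, h13, h23, hz1, hz2, hz3⟩ :
        ∃ (t1 t2 t3 : ℕ) (ht1 : t1 < (FP.letters γ).length)
          (ht2 : t2 < (FP.letters γ).length) (ht3 : t3 < (FP.letters γ).length),
          t1 ≠ t2 ∧ t1 ≠ t3 ∧ t2 ≠ t3 ∧
          ((FP.letters γ).get ⟨t1, ht1⟩).1 = 0 ∧
          ((FP.letters γ).get ⟨t2, ht2⟩).1 = 0 ∧
          ((FP.letters γ).get ⟨t3, ht3⟩).1 = 0 := by
      by_cases hf : ((FP.letters γ).get ⟨0, h0⟩).1 = 0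
      · refine ⟨0, 2, 4, by omega, by omega, by omega, by omega, by omega, by omega,
          hf, ?_, ?_⟩
        · exact ((halt 2 (by omega)).mpr (by decide)).trans hf
        · exact ((halt 4 (by omega)).mpr (by decide)).trans hf
      · have hf1 := hfin1 _ hf
        refine ⟨1, 3, 5, by omega, by omega, by omega, by omega, by omega, by omega,
          ?_, ?_, ?_⟩
        · exact hfin2 _ _ (fun hh => (by decide : ¬ Even 1) ((halt 1 (by omega)).mp hh)) hf1
        · exact hfin2 _ _ (fun hh => (by decide : ¬ Even 3) ((halt 3 (by omega)).mp hh)) hf1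
        · exact hfin2 _ _ (fun hh => (by decide : ¬ Even 5) ((halt 5 (by omega)).mp hh)) hf1
    have hd1' := hde t1 ht1 hz1
    have hd2' := hde t2 ht2 hz2
    have hd3' := hde t3 ht3 hz3
    rcases hd1' with hA | hA <;> rcases hd2' with hB | hB <;> rcases hd3' with hC | hC
    · exact hpair t1 t2 ht1 ht2 h12 hz1 hz2 d hA hB
    · exact hpair t1 t2 ht1 ht2 h12 hz1 hz2 d hA hB
    · exact hpair t1 t3 ht1 ht3 h13 hz1 hz3 d hA hC
    · exact hpair t2 t3 ht2 ht3 h23 hz2 hz3 ee hB hC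
    · exact hpair t2 t3 ht2 ht3 h23 hz2 hz3 d hB hC
    · exact hpair t1 t3 ht1 ht3 h13 hz1 hz3 ee hA hC
    · exact hpair t1 t2 ht1 ht2 h12 hz1 hz2 ee hA hB
    · exact hpair t1 t2 ht1 ht2 h12 hz1 hz2 ee hA hB
  · -- merge case: parity contradiction
    have hw : FP.wlen (π (p ++ [d] ++ invL p) * π (q ++ [ee] ++ invL q)) =
        (FP.letters γ).length := by rw [← hγπ]; rfl
    rw [hw] at hk
    simp only [List.length_append, invL_length, List.length_cons, List.length_nil] at hk
    omega

/-- An unbalanced element of asymmetric type of length at least `6` does not belong to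
`S_Γᶜ ⬝ S_Γᶜ`. -/
theorem FP.unbalanced_not_mem_S_compl_sq (G : Fin 2 → Type*)
    [∀ i, Group (G i)] [∀ i, Nontrivial (G i)] (γ : CoprodI G)
    (hunb : FP.Unbalanced γ) (hasym : FP.Asymmetric γ) (hlen : 6 ≤ FP.wlen γ) :
    ¬ ∃ σ τ : CoprodI G,
        (∃ n : ℕ, 1 ≤ n ∧ FP.wlen (σ ^ n) < n) ∧
        (∃ n : ℕ, 1 ≤ n ∧ FP.wlen (τ ^ n) < n) ∧ γ = σ * τ :=
  FPAux.main G γ hunb hasym hlen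
end

section
/- If φ : G → ℤ/2 * ℤ/2 is a surjective group homomorphism from a completely metrizable topological group G onto the infinite dihedral group, then the kernel of φ is not dense in G. -/
open Monoid

namespace FP

/-! ### Dependent-choice recursion helper -/

noncomputable def dcSeq {α : Type*} (d : α) (pick : (ℕ → α) → ℕ → α) : ℕ → α
  | M => pick (fun k => if h : k < M then dcSeq d pick k else d) M
  decreasing_by exact h

theorem dcSeq_eq {α : Type*} (d : α) (pick : (ℕ → α) → ℕ → α) (M : ℕ) :
    dcSeq d pick M = pick (fun k => if _h : k < M then dcSeq d pick k else d) M := by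
  rw [dcSeq]

/-! ### Nested approximants -/

variable {G : Type*} [Group G]

/-- `app gs n k y` : depth-`k` chain value at level `n`, with bottom `y` plugged at level `n+k`. -/
def app (gs : ℕ → G) : ℕ → ℕ → G → G
  | _, 0, y => y
  | n, k+1, y => app gs (n+1) k y * gs n * app gs (n+1) k y

theorem app_congr {gs gs' : ℕ → G} :
    ∀ (k n : ℕ) (y : G), (∀ i, n ≤ i → i < n + k → gs i = gs' i) →
      app gs n k y = app gs' n k y
  | 0, n, y, _ => rfl
  | k+1, n, y, h => by
    have hrec := app_congr (gs := gs) (gs' := gs') k (n+1) y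
      (fun i h1 h2 => h i (by omega) (by omega))
    simp only [app, hrec, h n (le_refl n) (by omega)]

theorem app_succ (gs : ℕ → G) :
    ∀ (k n : ℕ) (y : G), app gs n (k+1) y = app gs n k (y * gs (n+k) * y)
  | 0, n, y => by simp [app]
  | k+1, n, y => by
    show app gs (n+1) (k+1) y * gs n * app gs (n+1) (k+1) y = _
    rw [app_succ gs k (n+1) y]
    have hidx : n + 1 + k = n + (k+1) := by omega
    rw [hidx]
    rfl

theorem app_continuous [TopologicalSpace G] [IsTopologicalGroup G] (gs : ℕ → G) :
    ∀ (k n : ℕ), Continuous (fun y => app gs n k y)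
  | 0, _ => continuous_id
  | k+1, n => by
    have hrec := app_continuous gs k (n+1)
    exact (hrec.mul continuous_const).mul hrec

/-! ### The infinite dihedral group `ℤ/2 * ℤ/2` -/

abbrev Dinf : Type := CoprodI (fun _ : Bool => Multiplicative (ZMod 2))

def gg : Multiplicative (ZMod 2) := Multiplicative.ofAdd 1

def A : Dinf := CoprodI.of (M := fun _ : Bool => Multiplicative (ZMod 2)) (i := true) gg

def B : Dinf := CoprodI.of (M := fun _ : Bool => Multiplicative (ZMod 2)) (i := false) gg

/-- the translation `t = ab`. -/
def tD : Dinf := A * B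

theorem ggsq : gg * gg = 1 := by decide

theorem A_mul_A : A * A = 1 := by
  rw [A, ← map_mul, ggsq, map_one]

theorem B_mul_B : B * B = 1 := by
  rw [B, ← map_mul, ggsq, map_one]

theorem A_inv : A⁻¹ = A := inv_eq_of_mul_eq_one_right A_mul_A

theorem A_tD_A : A * tD * A = tD⁻¹ := by
  have h : A * (A * B) * A = A * A * (B * A) := by group
  have h2 : (A * B)⁻¹ = B⁻¹ * A⁻¹ := by group
  rw [tD, h, A_mul_A, one_mul, h2, A_inv,
    inv_eq_of_mul_eq_one_right B_mul_B]

theorem A_zpow (c : ℤ) : A * tD ^ c * A = tD ^ (-c) := by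
  have h : A * tD ^ c * A = (A * tD * A⁻¹) ^ c := by
    rw [conj_zpow, A_inv]
  rw [h, A_inv, A_tD_A, inv_zpow, zpow_neg]

theorem zpow_A (c : ℤ) : tD ^ c * A = A * tD ^ (-c) := by
  have := A_zpow c
  calc tD ^ c * A = A * (A * tD ^ c * A) := by
        rw [← mul_assoc, ← mul_assoc, A_mul_A, one_mul]
    _ = A * tD ^ (-c) := by rw [this]

theorem classify (u : Dinf) : (∃ k : ℤ, u = tD ^ k) ∨ (∃ k : ℤ, u = A * tD ^ k) := by
  induction u using CoprodI.induction_on with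
  | one => exact Or.inl ⟨0, by simp⟩
  | of i m =>
    have hm : m = 1 ∨ m = gg := by revert m; decide
    rcases hm with hm | hm
    · subst hm; exact Or.inl ⟨0, by simp⟩
    · subst hm
      cases i
      · refine Or.inr ⟨1, ?_⟩
        show B = A * tD ^ (1 : ℤ)
        rw [zpow_one, tD, ← mul_assoc, A_mul_A, one_mul]
      · exact Or.inr ⟨0, by rw [zpow_zero, mul_one]; rfl⟩
  | mul x y hx hy =>
    rcases hx with ⟨j, hj⟩ | ⟨j, hj⟩ <;> rcases hy with ⟨k, hk⟩ | ⟨k, hk⟩ <;> subst hj <;> subst hk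
    · exact Or.inl ⟨j + k, by rw [zpow_add]⟩
    · refine Or.inr ⟨-j + k, ?_⟩
      rw [← mul_assoc, zpow_A, mul_assoc, ← zpow_add]
    · exact Or.inr ⟨j + k, by rw [mul_assoc, zpow_add]⟩
    · refine Or.inl ⟨-j + k, ?_⟩
      calc A * tD ^ j * (A * tD ^ k) = A * (tD ^ j * A) * tD ^ k := by group
        _ = A * (A * tD ^ (-j)) * tD ^ k := by rw [zpow_A]
        _ = (A * A) * (tD ^ (-j) * tD ^ k) := by group
        _ = tD ^ (-j + k) := by rw [A_mul_A, one_mul, ← zpow_add]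

theorem sandwich (v : Dinf) (c : ℤ) : ∃ e : ℤ, v * tD ^ c * v = tD ^ e := by
  rcases classify v with ⟨k, hk⟩ | ⟨k, hk⟩ <;> subst hk
  · exact ⟨k + c + k, by rw [← zpow_add, ← zpow_add]⟩
  · refine ⟨-(k + c) + k, ?_⟩
    calc A * tD ^ k * tD ^ c * (A * tD ^ k) = A * (tD ^ (k + c) * A) * tD ^ k := by
          rw [zpow_add]; group
      _ = A * (A * tD ^ (-(k + c))) * tD ^ k := by rw [zpow_A]
      _ = (A * A) * (tD ^ (-(k + c)) * tD ^ k) := by group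
      _ = tD ^ (-(k + c) + k) := by rw [A_mul_A, one_mul, ← zpow_add]

/-- homomorphism out of `Multiplicative (ZMod 2)` sending the generator to an involution. -/
def invHom {M : Type*} [Group M] (s : M) (hs : s * s = 1) : Multiplicative (ZMod 2) →* M :=
  MonoidHom.mk' (fun x => if x = 1 then 1 else s) (by
    intro a b
    have h : ∀ x : Multiplicative (ZMod 2), x = 1 ∨ x = gg := by decide
    have hne : gg ≠ 1 := by decide
    have hgg : gg * gg = 1 := ggsq
    rcases h a with ha | ha <;> rcases h b with hb | hb <;> subst ha <;> subst hb <;>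
      simp [hne, hgg, hs])

noncomputable def rho : Dinf →* DihedralGroup 0 :=
  CoprodI.lift (fun i => invHom (DihedralGroup.sr (if i then 0 else 1))
    (DihedralGroup.sr_mul_self _))

theorem rho_tD : rho tD = DihedralGroup.r 1 := by
  have hA : rho A = DihedralGroup.sr 0 := by
    rw [A, rho, CoprodI.lift_of]
    simp [invHom, MonoidHom.mk'_apply, show gg ≠ 1 by decide]
  have hB : rho B = DihedralGroup.sr 1 := by
    rw [B, rho, CoprodI.lift_of]
    simp [invHom, MonoidHom.mk'_apply, show gg ≠ 1 by decide]
  rw [tD, map_mul, hA, hB, DihedralGroup.sr_mul_sr]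
  norm_num

theorem tD_pow_eq_one {n : ℕ} (h : tD ^ n = 1) : n = 0 := by
  have h1 : rho (tD ^ n) = 1 := by rw [h, map_one]
  rw [map_pow, rho_tD, DihedralGroup.r_one_pow, DihedralGroup.one_def] at h1
  have h2 : (n : ZMod 0) = 0 := by
    exact DihedralGroup.r.inj h1
  rwa [ZMod.natCast_eq_zero_iff, zero_dvd_iff] at h2

theorem tD_zpow_inj {a b : ℤ} (h : tD ^ a = tD ^ b) : a = b := by
  have h1 : tD ^ (a - b) = 1 := by
    rw [zpow_sub, h, mul_inv_cancel]
  have h2 : tD ^ ((a - b).natAbs) = 1 := by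
    rcases Int.natAbs_eq (a - b) with he | he
    · rw [← zpow_natCast, ← he, h1]
    · rw [← zpow_natCast, ← neg_neg ((a - b).natAbs : ℤ), ← he, zpow_neg, h1, inv_one]
  have := tD_pow_eq_one h2
  omega

end FP

/-- A surjective homomorphism from a completely metrizable topological group onto the
infinite dihedral group `ℤ/2 * ℤ/2` cannot have dense kernel. -/
theorem FP.dihedral_kernel_not_dense {H : Type*} [Group H]
    [tH : TopologicalSpace H] [IsTopologicalGroup H]
    (hcm : ∃ m : MetricSpace H,
      m.toUniformSpace.toTopologicalSpace = tH ∧ @CompleteSpace _ m.toUniformSpace)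
    (φ : H →* CoprodI (fun _ : Bool => Multiplicative (ZMod 2)))
    (hsurj : Function.Surjective φ) :
    ¬ Dense (φ.ker : Set H) := by
  obtain ⟨m, hm, hcomp⟩ := hcm
  subst hm
  letI : MetricSpace H := m
  haveI : CompleteSpace H := hcomp
  intro hd
  -- every fiber of φ is dense
  have coset_dense : ∀ (w : FP.Dinf) (x : H) (ε : ℝ), 0 < ε →
      ∃ g : H, φ g = w ∧ dist g x < ε := by
    intro w x ε hε
    obtain ⟨h, hh⟩ := hsurj w
    have hcont : ContinuousAt (fun y : H => y * h) (x * h⁻¹) :=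
      (continuous_mul_right h).continuousAt
    rw [Metric.continuousAt_iff] at hcont
    obtain ⟨δ, hδ, hδ'⟩ := hcont ε hε
    obtain ⟨z, hz, hzd⟩ := hd.exists_dist_lt (x * h⁻¹) hδ
    have hzker : φ z = 1 := hz
    refine ⟨z * h, by rw [map_mul, hzker, one_mul, hh], ?_⟩
    have := hδ' (by rw [dist_comm] at hzd; exact hzd)
    rwa [inv_mul_cancel_right] at this
  -- the exponent pattern
  let jz : ℕ → ℤ := fun n => if Even n then 1 else 0
  let w : ℕ → FP.Dinf := fun M => FP.tD ^ (jz M)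
  -- uniform continuity at 1 for finitely many maps
  have delta_exists : ∀ (F : ℕ → H → H), (∀ n, Continuous (F n)) → ∀ (N : ℕ) (ε : ℝ), 0 < ε →
      ∃ δ : ℝ, 0 < δ ∧ ∀ y : H, dist y 1 < δ → ∀ n ≤ N, dist (F n y) (F n 1) < ε := by
    intro F hF N ε hε
    induction N with
    | zero =>
      obtain ⟨δ, hδ, h⟩ := Metric.continuousAt_iff.mp (hF 0).continuousAt ε hε
      exact ⟨δ, hδ, fun y hy n hn => by rw [Nat.le_zero.mp hn]; exact h hy⟩
    | succ N ih =>
      obtain ⟨δ1, hδ1, h1⟩ := ih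
      obtain ⟨δ2, hδ2, h2⟩ := Metric.continuousAt_iff.mp (hF (N+1)).continuousAt ε hε
      refine ⟨min δ1 δ2, lt_min hδ1 hδ2, fun y hy n hn => ?_⟩
      rcases Nat.le_succ_iff.mp hn with hn' | hn'
      · exact h1 y (lt_of_lt_of_le hy (min_le_left _ _)) n hn'
      · rw [hn']; exact h2 (lt_of_lt_of_le hy (min_le_right _ _))
  -- existence of the next element of the chain
  have EX : ∀ (f : ℕ → H) (M : ℕ), ∃ x : H, φ x = w M ∧
      ∀ n ≤ M, dist (FP.app f n (M - n) x) (FP.app f n (M - n) 1) ≤ (1/2 : ℝ)^M := by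
    intro f M
    obtain ⟨δ, hδ, hδ'⟩ := delta_exists (fun n y => FP.app f n (M - n) y)
      (fun n => FP.app_continuous f _ _) M ((1/2 : ℝ)^M) (by positivity)
    obtain ⟨x, hx, hxd⟩ := coset_dense (w M) 1 δ hδ
    exact ⟨x, hx, fun n hn => le_of_lt (hδ' x hxd n hn)⟩
  let pick : (ℕ → H) → ℕ → H := fun f M => Classical.choose (EX f M)
  let gs : ℕ → H := FP.dcSeq 1 pick
  have specG : ∀ M : ℕ, φ (gs M) = w M ∧ ∀ n ≤ M,
      dist (FP.app gs n (M - n) (gs M)) (FP.app gs n (M - n) 1) ≤ (1/2 : ℝ)^M := by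
    intro M
    have heq : gs M = pick (fun k => if _h : k < M then gs k else 1) M :=
      FP.dcSeq_eq 1 pick M
    have hsp := Classical.choose_spec (EX (fun k => if _h : k < M then gs k else 1) M)
    have heq2 : Classical.choose (EX (fun k => if _h : k < M then gs k else 1) M) = gs M :=
      heq.symm
    rw [heq2] at hsp
    obtain ⟨h1, h2⟩ := hsp
    refine ⟨h1, fun n hn => ?_⟩
    have hc : ∀ y : H, FP.app (fun k => if _h : k < M then gs k else 1) n (M - n) y
        = FP.app gs n (M - n) y := by
      intro y
      exact FP.app_congr _ _ _ (fun i hi1 hi2 => by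
        rw [dif_pos (by omega : i < M)])
    have h3 := h2 n hn
    rwa [hc, hc] at h3
  -- the rows and their limits
  let row : ℕ → ℕ → H := fun n M => FP.app gs n (M - n) 1
  have row_step : ∀ n M : ℕ, dist (row n M) (row n (M+1)) ≤ (1/2 : ℝ)^M := by
    intro n M
    by_cases hnM : n ≤ M
    · have h1 : row n (M+1) = FP.app gs n (M - n) (gs M) := by
        show FP.app gs n (M + 1 - n) 1 = _
        rw [show M + 1 - n = (M - n) + 1 by omega, FP.app_succ]
        rw [show n + (M - n) = M by omega, one_mul, mul_one]
      rw [h1, dist_comm]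
      exact (specG M).2 n hnM
    · have e1 : M - n = 0 := by omega
      have e2 : M + 1 - n = 0 := by omega
      show dist (FP.app gs n (M - n) 1) (FP.app gs n (M + 1 - n) 1) ≤ _
      rw [e1, e2]
      simp only [FP.app, dist_self]
      positivity
  have row_cauchy : ∀ n, CauchySeq (row n) := by
    intro n
    refine cauchySeq_of_le_geometric (1/2 : ℝ) 1 (by norm_num) (fun M => ?_)
    simpa using row_step n M
  have hKex : ∀ n, ∃ l : H, Filter.Tendsto (row n) Filter.atTop (nhds l) :=
    fun n => cauchySeq_tendsto_of_complete (row_cauchy n)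
  choose K hK using hKex
  -- limit relations
  have Krel : ∀ n, K n = K (n+1) * gs n * K (n+1) := by
    intro n
    have h2 : Filter.Tendsto (fun M => row (n+1) M * gs n * row (n+1) M) Filter.atTop
        (nhds (K (n+1) * gs n * K (n+1))) :=
      ((hK (n+1)).mul tendsto_const_nhds).mul (hK (n+1))
    have hev : row n =ᶠ[Filter.atTop] (fun M => row (n+1) M * gs n * row (n+1) M) := by
      filter_upwards [Filter.eventually_ge_atTop (n+1)] with M hM
      show FP.app gs n (M - n) 1 = _
      rw [show M - n = (M - (n+1)) + 1 by omega]
      rfl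
    exact tendsto_nhds_unique (hK n) (Filter.Tendsto.congr' hev.symm h2)
  have urel : ∀ n, φ (K n) = φ (K (n+1)) * FP.tD ^ (jz n) * φ (K (n+1)) := by
    intro n
    conv_lhs => rw [Krel n]
    rw [map_mul, map_mul, (specG n).1]
  have hex : ∀ n, ∃ e : ℤ, φ (K n) = FP.tD ^ e := by
    intro n
    obtain ⟨e, he⟩ := FP.sandwich (φ (K (n+1))) (jz n)
    exact ⟨e, by rw [urel n]; exact he⟩
  choose e he using hex
  have erel : ∀ n, e n = e (n+1) + jz n + e (n+1) := by
    intro n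
    have h := urel n
    rw [he n, he (n+1)] at h
    rw [← zpow_add, ← zpow_add] at h
    exact FP.tD_zpow_inj h
  -- integer arithmetic contradiction
  have key : ∀ p : ℕ, 3 * e 0 + 1 = 4 ^ p * (3 * e (2 * p) + 1) := by
    intro p
    induction p with
    | zero => simp
    | succ p ih =>
      have h1 := erel (2*p)
      have h2 := erel (2*p+1)
      have hj1 : jz (2*p) = 1 := by simp [jz]
      have hj2 : jz (2*p+1) = 0 := by
        simp only [jz, if_neg (by simp [Nat.even_add_one, parity_simps] : ¬ Even (2*p+1))]
      rw [hj1] at h1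
      rw [hj2] at h2
      have h3 : 3 * e (2*p) + 1 = 4 * (3 * e (2*p+1+1) + 1) := by omega
      rw [ih, show 2 * (p+1) = 2*p+1+1 by ring, h3]
      ring
  have hne : 3 * e 0 + 1 ≠ 0 := by omega
  have hdvd : ∀ p : ℕ, (4:ℤ)^p ≤ |3 * e 0 + 1| := by
    intro p
    refine Int.le_of_dvd (abs_pos.mpr hne) ((dvd_abs _ _).mpr ⟨_, key p⟩)
  set N : ℕ := (3 * e 0 + 1).natAbs with hN
  have h1 : |3 * e 0 + 1| = (N : ℤ) := Int.abs_eq_natAbs _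
  have h2 : (4:ℤ)^N ≤ (N : ℤ) := h1 ▸ hdvd N
  have h3 : (N : ℤ) < 2^N := by exact_mod_cast (Nat.lt_two_pow_self (n := N))
  have h4 : (2:ℤ)^N ≤ 4^N := pow_le_pow_left₀ (by norm_num) (by norm_num) N
  linarith
end
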